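/- If ∘ is a commutative, associative binary operation on ℤ distributing over usual addition and possessing a two-sided identity element, then either ∘ equals the usual multiplication on ℤ, or n ∘ m = -(n · m) for all n, m. -/

import Mathlib

/-!
Additivity in the second argument makes `f n` a group endomorphism of `ℤ`, so `f n m = m * f n 1`;
by commutativity also `f n 1 = n * f 1 1`, whence `f n m = n * m * f 1 1`. The identity `u` gives
`u * f 1 1 = 1`, so `f 1 1` is a unit of `ℤ`, i.e. `±1`.
-/

theorem Int.eq_mul_apply_one_of_map_add {g : ℤ → ℤ} (hg : ∀ m k, g (m + k) = g m + g k) (m : ℤ) :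
    g m = m * g 1 := by
  simpa using map_zsmul (AddMonoidHom.mk' g hg) m 1

theorem Int.eq_mul_mul_apply_one_one_of_comm_of_map_add {f : ℤ → ℤ → ℤ}
    (hcomm : ∀ n m, f n m = f m n) (hdist : ∀ n m k, f n (m + k) = f n m + f n k) (n m : ℤ) :
    f n m = n * m * f 1 1 := by
  rw [Int.eq_mul_apply_one_of_map_add (hdist n) m, hcomm n 1,
    Int.eq_mul_apply_one_of_map_add (hdist 1) n]
  ring

theorem stmt_5_general (f : ℤ → ℤ → ℤ)
    (hcomm : ∀ n m : ℤ, f n m = f m n)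
    (hdist : ∀ n m k : ℤ, f n (m + k) = f n m + f n k)
    (hunit : ∃ u : ℤ, ∀ n : ℤ, f u n = n) :
    (∀ n m : ℤ, f n m = n * m) ∨ (∀ n m : ℤ, f n m = -(n * m)) := by
  have hf := Int.eq_mul_mul_apply_one_one_of_comm_of_map_add hcomm hdist
  obtain ⟨u, hu⟩ := hunit
  have h11 : IsUnit (f 1 1) := .of_mul_eq_one u (by linarith [hf u 1, hu 1])
  rcases Int.isUnit_iff.mp h11 with h | h
  · exact .inl fun n m => by rw [hf, h, mul_one]
  · exact .inr fun n m => by rw [hf, h, mul_neg_one]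

theorem stmt_5 (f : ℤ → ℤ → ℤ)
    (hcomm : ∀ n m : ℤ, f n m = f m n)
    (hassoc : ∀ n m k : ℤ, f (f n m) k = f n (f m k))
    (hdist : ∀ n m k : ℤ, f n (m + k) = f n m + f n k)
    (hunit : ∃ u : ℤ, ∀ n : ℤ, f u n = n) :
    (∀ n m : ℤ, f n m = n * m) ∨ (∀ n m : ℤ, f n m = -(n * m)) :=
  stmt_5_general f hcomm hdist hunit
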